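/- arXiv:2511.03627 — 2 statements merged into one kernel-verified Lean document; each statement's English description precedes it below -/
import Mathlib

section
/- Assume s₀ ≠ 1. Then the centralizer in Q of the set {[1,g] : g ∈ G} (the image of G in Q) equals {[s,z] : s ∈ S, z ∈ Z(G)}, the image under ν of S × Z(G), where Z(G) denotes the center of G. Moreover, this subgroup equals the image {[s,1] : s ∈ S} of S in Q if and only if Z(G) = {1, g₀}. (This is the paper's claim in §4.2.1 that a lift fixed by H-conjugation takes values in Spin(V) ×_{ℤ₂} Z(H), which is the image of Spin(V) if and only if Z(H) = ℤ₂.) -/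
lemma zpowers_sq_cases {M : Type*} [Group M] {g x : M} (h : g ^ 2 = 1)
    (hx : x ∈ Subgroup.zpowers g) : x = 1 ∨ x = g := by
  obtain ⟨n, rfl⟩ := hx
  have h2 : g ^ (2 : ℤ) = 1 := by
    rw [show (2:ℤ) = ((2:ℕ):ℤ) from rfl, zpow_natCast, h]
  rcases Int.even_or_odd n with ⟨k, hk⟩ | ⟨k, hk⟩
  · left
    subst hk
    show g ^ (k + k) = 1
    rw [show k + k = 2 * k by ring, zpow_mul, h2, one_zpow]
  · right
    subst hk
    show g ^ (2 * k + 1) = g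
    rw [zpow_add, zpow_mul, h2, one_zpow, one_mul, zpow_one]

/-- Abstract spin-G group setting: `S`, `G` groups with central elements `s₀`, `g₀`
squaring to `1`; `Q = (S × G)/⟨(s₀,g₀)⟩` is presented via a surjective homomorphism
`ν : S × G →* Q` with kernel the subgroup generated by `(s₀,g₀)`.

STATEMENT 9: assuming `s₀ ≠ 1`, the centralizer in `Q` of the image `{[1,g] : g ∈ G}`
of `G` equals `{[s,z] : s ∈ S, z ∈ Z(G)}`; moreover this set equals the image
`{[s,1] : s ∈ S}` of `S` if and only if `Z(G) = {1, g₀}`. -/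
theorem centralizer_of_image_of_G
    {S G Q : Type*} [Group S] [Group G] [Group Q]
    (s₀ : S) (g₀ : G)
    (hs : s₀ ∈ Subgroup.center S) (hg : g₀ ∈ Subgroup.center G)
    (hs2 : s₀ ^ 2 = 1) (hg2 : g₀ ^ 2 = 1)
    (ν : S × G →* Q) (hνsurj : Function.Surjective ν)
    (hνker : ν.ker = Subgroup.zpowers (s₀, g₀))
    (hs0 : s₀ ≠ 1) :
    ((Subgroup.centralizer (Set.range fun g : G => ν (1, g)) : Set Q)
      = {q : Q | ∃ s : S, ∃ z ∈ Subgroup.center G, q = ν (s, z)}) ∧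
    ({q : Q | ∃ s : S, ∃ z ∈ Subgroup.center G, q = ν (s, z)}
        = Set.range (fun s : S => ν (s, 1))
      ↔ (Subgroup.center G : Set G) = {1, g₀}) := by
  have hsq : (s₀, g₀) ^ 2 = (1 : S × G) := by
    simp [Prod.pow_mk, Prod.ext_iff, hs2, hg2]
  have hker : ∀ x : S × G, ν x = 1 → x = 1 ∨ x = (s₀, g₀) := by
    intro x hx
    exact zpowers_sq_cases hsq (hνker ▸ MonoidHom.mem_ker.mpr hx)
  have hν0 : ν (s₀, g₀) = 1 := by
    have : (s₀, g₀) ∈ ν.ker := hνker ▸ Subgroup.mem_zpowers _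
    exact MonoidHom.mem_ker.mp this
  constructor
  · ext q
    simp only [Set.mem_setOf_eq, SetLike.mem_coe, Subgroup.mem_centralizer_iff]
    constructor
    · intro hq
      obtain ⟨⟨s, h⟩, rfl⟩ := hνsurj q
      refine ⟨s, h, ?_, rfl⟩
      rw [Subgroup.mem_center_iff]
      intro g
      have hcomm := hq (ν (1, g)) ⟨g, rfl⟩
      rw [← ν.map_mul, ← ν.map_mul] at hcomm
      have hk : ν (((1, g) * (s, h)) * ((s, h) * (1, g))⁻¹) = 1 := by
        rw [ν.map_mul, hcomm, ν.map_inv, mul_inv_cancel]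
      rcases hker _ hk with h1 | h1
      · have h2 : (1, g) * (s, h) = (s, h) * (1, g) := by
          rwa [mul_inv_eq_one] at h1
        have := congrArg Prod.snd h2
        simpa using this
      · exfalso
        apply hs0
        have := congrArg Prod.fst h1
        simpa using this.symm
    · rintro ⟨s, z, hz, rfl⟩ q' ⟨g, rfl⟩
      rw [← ν.map_mul, ← ν.map_mul]
      congr 1
      simp [Prod.ext_iff]
      exact Subgroup.mem_center_iff.mp hz g
  · constructor
    · intro h
      ext g
      constructor
      · intro hgc
        have hmem : ν (1, g) ∈ {q : Q | ∃ s : S, ∃ z ∈ Subgroup.center G, q = ν (s, z)} :=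
          ⟨1, g, hgc, rfl⟩
        rw [h] at hmem
        obtain ⟨s, hsg⟩ := hmem
        have hk : ν ((1, g) * (s, 1)⁻¹) = 1 := by
          rw [ν.map_mul, ν.map_inv, ← hsg, mul_inv_cancel]
        rcases hker _ hk with h1 | h1
        · left
          have := congrArg Prod.snd h1; simpa using this
        · right
          have := congrArg Prod.snd h1; simpa using this
      · rintro (rfl | rfl)
        · exact Subgroup.one_mem _
        · exact hg
    · intro h
      ext q
      constructor
      · rintro ⟨s, z, hz, rfl⟩
        have hzmem : z ∈ ({1, g₀} : Set G) := h ▸ hz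
        rcases hzmem with rfl | hz2
        · exact ⟨s, rfl⟩
        · rw [hz2]
          refine ⟨s * s₀, ?_⟩
          show ν (s * s₀, 1) = ν (s, g₀)
          have heq : (s * s₀, (1 : G)) = (s, g₀) * (s₀, g₀) := by
            have : (1 : G) = g₀ * g₀ := by rw [← sq, hg2]
            simp [Prod.ext_iff, this]
          rw [heq, ν.map_mul, hν0, mul_one]
      · rintro ⟨s, rfl⟩
        exact ⟨s, 1, Subgroup.one_mem _, rfl⟩
end

section
/- Let M be a k-module, ℒ : L → End_k(M) a k-linear map, and a : 𝔥 → End_k(M) a k-linear map satisfying a([γ,γ']) = a(γ)∘a(γ') − a(γ')∘a(γ). Assume further that ℒ_X ∘ ℒ_Y − ℒ_Y ∘ ℒ_X = ℒ_{[X,Y]} + a(F(X,Y)) for all X, Y ∈ L, and ℒ_X ∘ a(γ) − a(γ) ∘ ℒ_X = a(D_X γ) for all X ∈ L, γ ∈ 𝔥. Then the map (X,γ) ↦ ℒ_X + a(γ) is a Lie algebra homomorphism from the Lie algebra L × 𝔥 with bracket ⟦(X,γ),(Y,γ')⟧ = ([X,Y], F(X,Y) + D_X γ' − D_Y γ + [γ,γ'])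 to End_k(M) with the commutator bracket; in particular M becomes a module over this Lie algebra. (This is the second part of the paper's Proposition 3.6: sections of any associated bundle form a module over the symmetry algebra, with Killing vectors acting via the covariant Lie derivative and 𝔊 acting fibre-wise.) -/
/-- The deformed bracket `⟦(X,γ),(Y,γ')⟧ = ([X,Y], F(X,Y) + D_X γ' − D_Y γ + [γ,γ'])`
on `L × 𝔥` (the symmetry algebra bracket of the paper). -/
def symmBracket {k L H : Type*} [CommRing k]
    [LieRing L] [LieAlgebra k L] [LieRing H] [LieAlgebra k H]
    (D : L →ₗ[k] H →ₗ[k] H) (F : L →ₗ[k] L →ₗ[k] H) (p q : L × H) : L × H :=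
  (⁅p.1, q.1⁆, F p.1 q.1 + D p.1 q.2 - D q.1 p.2 + ⁅p.2, q.2⁆)

/-- given a `k`-module `M`, a linear map `ℒ : L → End(M)` and a linear
map `a : 𝔥 → End(M)` intertwining the bracket of `𝔥` with the commutator, such that
`[ℒ_X, ℒ_Y] = ℒ_{[X,Y]} + a(F(X,Y))` and `[ℒ_X, a(γ)] = a(D_X γ)`, the map
`(X,γ) ↦ ℒ_X + a(γ)` is a Lie algebra homomorphism from the symmetry algebra
`L × 𝔥` (with the deformed bracket) to `End(M)` with the commutator bracket;
in particular `M` is a module over the symmetry algebra. -/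
theorem symmetry_algebra_module
    {k L H : Type*} [CommRing k]
    [LieRing L] [LieAlgebra k L] [LieRing H] [LieAlgebra k H]
    (D : L →ₗ[k] H →ₗ[k] H) (F : L →ₗ[k] L →ₗ[k] H)
    (hder : ∀ (X : L) (γ γ' : H), D X ⁅γ, γ'⁆ = ⁅D X γ, γ'⁆ + ⁅γ, D X γ'⁆)
    (hFalt : ∀ X : L, F X X = 0)
    (hi : ∀ (X Y : L) (γ : H),
      D X (D Y γ) - D Y (D X γ) = D ⁅X, Y⁆ γ + ⁅F X Y, γ⁆)
    (hii : ∀ X Y Z : L,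
      F X ⁅Y, Z⁆ + F Y ⁅Z, X⁆ + F Z ⁅X, Y⁆
        + D X (F Y Z) + D Y (F Z X) + D Z (F X Y) = 0)
    (M : Type*) [AddCommGroup M] [Module k M]
    (ℒ : L →ₗ[k] Module.End k M) (a : H →ₗ[k] Module.End k M)
    (ha : ∀ γ γ' : H, a ⁅γ, γ'⁆ = a γ * a γ' - a γ' * a γ)
    (hℒ : ∀ X Y : L, ℒ X * ℒ Y - ℒ Y * ℒ X = ℒ ⁅X, Y⁆ + a (F X Y))
    (hmix : ∀ (X : L) (γ : H), ℒ X * a γ - a γ * ℒ X = a (D X γ)) :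
    (∀ p q : L × H,
      (ℒ (p + q).1 + a (p + q).2) = (ℒ p.1 + a p.2) + (ℒ q.1 + a q.2)) ∧
    (∀ (t : k) (p : L × H),
      (ℒ (t • p).1 + a (t • p).2) = t • (ℒ p.1 + a p.2)) ∧
    (∀ p q : L × H,
      (ℒ (symmBracket D F p q).1 + a (symmBracket D F p q).2)
        = (ℒ p.1 + a p.2) * (ℒ q.1 + a q.2)
          - (ℒ q.1 + a q.2) * (ℒ p.1 + a p.2)) := by
  refine ⟨fun p q => by simp [map_add]; abel, fun t p => by simp [map_smul], ?_⟩
  intro p q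
  have h1 := hℒ p.1 q.1
  have h2 := hmix p.1 q.2
  have h3 := hmix q.1 p.2
  have h4 := ha p.2 q.2
  simp only [symmBracket, map_add, map_sub]
  have h1' : ℒ ⁅p.1, q.1⁆ = ℒ p.1 * ℒ q.1 - ℒ q.1 * ℒ p.1 - a (F p.1 q.1) := by
    rw [h1]; abel
  rw [h1', ← h2, ← h3, h4]
  noncomm_ring
end
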